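/- For any assignment of real numbers μ_i (one per unit i ∈ A) and any real number μ_g, the following exact decomposition holds: N⁻¹ Σ_{i∈A} π_i⁻¹ { δ_i g(y_i) + (1−δ_i) g(y_{i(1)}) } − μ_g = [ N⁻¹ Σ_{i∈A} π_i⁻¹ { μ_i + δ_i (1+k_i)(g(y_i) − μ_i) } − μ_g ] + N⁻¹ Σ_{i∈A} π_i⁻¹ (1−δ_i)(μ_{i(1)} − μ_i). -/
import Mathlib


open Finset

/-- Exact decomposition of the nearest neighbor imputation estimator minus `μ_g` into
the main term `D_N/√n` and the matching-discrepancy (bias) term `B_N/√n`. -/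
theorem nni_decomposition (n N : ℕ) (hN : 0 < N)
    (y π δ : Fin n → ℝ) (hπ : ∀ i, 0 < π i) (hδ : ∀ i, δ i = 0 ∨ δ i = 1)
    (nn : Fin n → Fin n) (hnn : ∀ j, δ j = 0 → δ (nn j) = 1)
    (d : Fin n → Fin n → ℝ) (hd : ∀ i j, d i j = if nn j = i then 1 else 0)
    (k : Fin n → ℝ) (hk : ∀ i, k i = ∑ j, (π i / π j) * (1 - δ j) * d i j)
    (g : ℝ → ℝ) (μ : Fin n → ℝ) (μg : ℝ) :
    (N : ℝ)⁻¹ * (∑ i, (π i)⁻¹ * (δ i * g (y i) + (1 - δ i) * g (y (nn i)))) - μg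
      = ((N : ℝ)⁻¹ * (∑ i, (π i)⁻¹ * (μ i + δ i * (1 + k i) * (g (y i) - μ i))) - μg)
        + (N : ℝ)⁻¹ * ∑ i, (π i)⁻¹ * ((1 - δ i) * (μ (nn i) - μ i)) := by
  have key : ∑ i, (π i)⁻¹ * (δ i * (k i * (g (y i) - μ i)))
      = ∑ j, (π j)⁻¹ * ((1 - δ j) * (g (y (nn j)) - μ (nn j))) := by
    have : ∀ i, (π i)⁻¹ * (δ i * (k i * (g (y i) - μ i)))
        = ∑ j, (π j)⁻¹ * (δ i * (1 - δ j) * (if nn j = i then 1 else 0)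
            * (g (y i) - μ i)) := by
      intro i
      rw [hk, Finset.sum_mul, Finset.mul_sum, Finset.mul_sum]
      refine Finset.sum_congr rfl fun j _ => ?_
      rw [hd]
      have h1 := (hπ i).ne'
      have h2 := (hπ j).ne'
      field_simp
    simp_rw [this]
    rw [Finset.sum_comm]
    refine Finset.sum_congr rfl fun j _ => ?_
    rw [Finset.sum_eq_single (nn j)]
    · rw [if_pos rfl]
      rcases hδ j with h0 | h1
      · rw [hnn j h0, h0]; ring
      · rw [h1]; ring
    · intro i _ hi
      rw [if_neg (fun h => hi h.symm)]
      ring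
    · intro h; exact absurd (Finset.mem_univ _) h
  have sums : (∑ i, (π i)⁻¹ * (δ i * g (y i) + (1 - δ i) * g (y (nn i))))
      = (∑ i, (π i)⁻¹ * (μ i + δ i * (1 + k i) * (g (y i) - μ i)))
        + ∑ i, (π i)⁻¹ * ((1 - δ i) * (μ (nn i) - μ i)) := by
    have expand : ∀ i, (π i)⁻¹ * (μ i + δ i * (1 + k i) * (g (y i) - μ i))
        = (π i)⁻¹ * (μ i + δ i * (g (y i) - μ i))
          + (π i)⁻¹ * (δ i * (k i * (g (y i) - μ i))) := fun i => by ring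
    simp_rw [expand]
    rw [Finset.sum_add_distrib, key, ← Finset.sum_add_distrib, ← Finset.sum_add_distrib]
    refine Finset.sum_congr rfl fun i _ => ?_
    ring
  rw [sums]; ring
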